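/- Centered inner-loop preprocessing: let p be even, m ≥ 1, n = q/(p/2) an integer, and f indexed over {-pm/2,...,pm/2-1}. Writing r = un + v with u ∈ {0,...,p/2-1}, v ∈ {0,...,n-1}, one has w_{un+v,s} = ζ_{qm}^{(un+v)s} ∑_{t=0}^{p/2-1} ζ_{p/2}^{ut} [ ζ_q^{vt} ( f_{tm+s} + ζ_n^{-v} f_{tm+s-pm/2} ) ], where w_{r,s} = ζ_{qm}^{rs} ∑_{t=0}^{p/2-1} ζ_q^{rt}( f_{tm+s} + ζ_{2q}^{-rp} f_{tm+s-pm/2} ). -/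

import Mathlib

open Finset Complex

/-- The primitive root of unity `exp(2πi/N)`. -/
noncomputable def zeta (N : ℕ) : ℂ := Complex.exp (2 * Real.pi * Complex.I / N)

lemma zeta_ne_zero (N : ℕ) : zeta N ≠ 0 := Complex.exp_ne_zero _

lemma zeta_mul_pow (a b : ℕ) (ha : 0 < a) (hb : 0 < b) :
    zeta (a * b) ^ b = zeta a := by
  unfold zeta
  rw [← Complex.exp_nat_mul]
  congr 1
  have ha' : (a : ℂ) ≠ 0 := Nat.cast_ne_zero.mpr ha.ne'
  have hb' : (b : ℂ) ≠ 0 := Nat.cast_ne_zero.mpr hb.ne'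
  push_cast
  field_simp

lemma zeta_pow_self (N : ℕ) (h : 0 < N) : zeta N ^ N = 1 := by
  unfold zeta
  rw [← Complex.exp_nat_mul]
  have hN : (N : ℂ) ≠ 0 := Nat.cast_ne_zero.mpr h.ne'
  have : (N : ℂ) * (2 * Real.pi * Complex.I / N) = 2 * Real.pi * Complex.I := by
    field_simp
  rw [this]
  exact Complex.exp_two_pi_mul_I

/-- Centered inner-loop preprocessing: for even `p`, `q = n·(p/2)`, writing
`r = un + v`, the centered preprocessing quantity
`w_{r,s} = ζ_{qm}^{rs} ∑_{t<p/2} ζ_q^{rt}(f_{tm+s} + ζ_{2q}^{-rp} f_{tm+s-pm/2})`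
equals `ζ_{qm}^{(un+v)s} ∑_{t<p/2} ζ_{p/2}^{ut} [ζ_q^{vt}(f_{tm+s} + ζ_n^{-v} f_{tm+s-pm/2})]`. -/
theorem stmt13 (m p n q : ℕ) (hm : 0 < m) (hp : 0 < p) (hpe : p % 2 = 0)
    (hn : 0 < n) (hq : q = n * (p / 2))
    (f : ℤ → ℂ)
    (u v s : ℕ) (hu : u < p / 2) (hv : v < n) (hs : s < m) :
    zeta (q * m) ^ ((u * n + v) * s) *
        ∑ t ∈ Finset.range (p / 2), zeta q ^ ((u * n + v) * t) *
          (f (t * m + s : ℕ) + zeta (2 * q) ^ (-((u * n + v) * p : ℤ)) *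
            f ((t * m + s : ℤ) - (p * m / 2 : ℤ))) =
      zeta (q * m) ^ ((u * n + v) * s) *
        ∑ t ∈ Finset.range (p / 2), zeta (p / 2) ^ (u * t) *
          (zeta q ^ (v * t) *
            (f (t * m + s : ℕ) + zeta n ^ (-(v : ℤ)) *
              f ((t * m + s : ℤ) - (p * m / 2 : ℤ)))) := by
  have hp2 : 0 < p / 2 := Nat.div_pos (by omega) (by norm_num)
  have hqpos : 0 < q := by rw [hq]; exact Nat.mul_pos hn hp2
  -- key fact 1 : zeta q ^ n = zeta (p/2)
  have h1 : zeta q ^ n = zeta (p / 2) := by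
    have : q = (p / 2) * n := by rw [hq, Nat.mul_comm]
    rw [this]; exact zeta_mul_pow _ _ hp2 hn
  -- key fact 2 : zeta (2q) ^ p = zeta n
  have h2 : zeta (2 * q) ^ p = zeta n := by
    have : 2 * q = n * p := by
      rw [hq, mul_comm 2, mul_assoc, Nat.div_mul_cancel (Nat.dvd_of_mod_eq_zero hpe)]
    rw [this]; exact zeta_mul_pow _ _ hn hp
  -- key fact 3 : zeta n ^ n = 1
  have h3 : zeta n ^ n = 1 := zeta_pow_self n hn
  congr 1
  apply Finset.sum_congr rfl
  intro t _
  have e1 : zeta q ^ ((u * n + v) * t) = zeta (p / 2) ^ (u * t) * zeta q ^ (v * t) := by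
    have : (u * n + v) * t = n * (u * t) + v * t := by ring
    rw [this, pow_add, pow_mul, h1]
  have e2 : zeta (2 * q) ^ (-((u * n + v) * p : ℤ)) = zeta n ^ (-(v : ℤ)) := by
    have hz : zeta (2 * q) ≠ 0 := zeta_ne_zero _
    have hzn : zeta n ≠ 0 := zeta_ne_zero _
    have : (-((u * n + v) * p : ℤ)) = p * (-(u * n + v : ℤ)) := by ring
    rw [this, zpow_mul, zpow_natCast, h2]
    have : (-(u * n + v : ℤ)) = -(v : ℤ) + n * (-(u : ℤ)) := by push_cast; ring
    rw [this, zpow_add₀ hzn, zpow_mul, zpow_natCast, h3, one_zpow, mul_one]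
  rw [e1, e2]
  ring
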